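/- For t ∈ [0,1) define u(t,x) = −x/(1−t) if 0 ≤ x ≤ (1−t)² and u(t,x) = −(1−t) if x ≥ (1−t)². Then: (a) at every point (t,x) with t ∈ [0,1), x > 0 and x ≠ (1−t)², the function u is differentiable in t and x and satisfies ∂_t u(t,x) + 2·u(t,x)·∂_x u(t,x) = ∫₀^x (∂_x u(t,y))² dy; (b) for every t ∈ [0,1), ∫₀^∞ (∂_x u(t,x))² dx = 1; (c) sup_{x ≥ 0} |u(t,x)| = 1−t, so u(t,·) converges uniformly to 0 as t → 1⁻. -/

import Mathlib

open MeasureTheory Set Real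

/-!
With `a = 1 - t`, the solution at time `t` is the ramp `x ↦ -x / a` up to `x = a²`, continued by the
constant `-a`. Its slope `-1/a` lives on an interval of length `a²`, so `∫₀^x u_x² = min x a² / a²`
and the energy is `1` for every `t`, while the height `a` of the plateau, which is also the
sup norm, tends to `0`. The equation is checked separately on the ramp, where `u_t + 2 u u_x` is
`-x/a² + 2x/a² = x/a²`, and on the plateau, where it is `1 + 0`.
-/

noncomputable def ramp (a x : ℝ) : ℝ := if x ≤ a ^ 2 then -x / a else -a

namespace ramp

variable {a x : ℝ}

lemma eq_of_le (hx : x ≤ a ^ 2) : ramp a x = -x / a := if_pos hx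

lemma eq_of_gt (hx : a ^ 2 < x) : ramp a x = -a := if_neg hx.not_ge

lemma hasDerivAt_of_lt (hx : x < a ^ 2) : HasDerivAt (ramp a) (-a⁻¹) x := by
  have hline : HasDerivAt (fun z : ℝ => -z / a) (-a⁻¹) x := by
    simpa [neg_div, div_eq_mul_inv] using (hasDerivAt_id x).neg.div_const a
  refine hline.congr_of_eventuallyEq ?_
  filter_upwards [eventually_lt_nhds hx] with z hz using eq_of_le hz.le

lemma hasDerivAt_of_gt (hx : a ^ 2 < x) : HasDerivAt (ramp a) 0 x := by
  refine (hasDerivAt_const x (-a)).congr_of_eventuallyEq ?_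
  filter_upwards [eventually_gt_nhds hx] with z hz using eq_of_gt hz

lemma hasDerivAt_param_of_lt (ha : a ≠ 0) (hx : x < a ^ 2) :
    HasDerivAt (fun b => ramp b x) (x / a ^ 2) a := by
  have hinv : HasDerivAt (fun b : ℝ => -x / b) (x / a ^ 2) a := by
    simpa [div_eq_mul_inv] using (hasDerivAt_inv ha).const_mul (-x)
  refine hinv.congr_of_eventuallyEq ?_
  have hsq : ContinuousAt (fun b : ℝ => b ^ 2) a := by fun_prop
  filter_upwards [hsq.eventually (eventually_gt_nhds hx)] with b hb using eq_of_le hb.le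

lemma hasDerivAt_param_of_gt (hx : a ^ 2 < x) : HasDerivAt (fun b => ramp b x) (-1) a := by
  refine (hasDerivAt_neg a).congr_of_eventuallyEq ?_
  have hsq : ContinuousAt (fun b : ℝ => b ^ 2) a := by fun_prop
  filter_upwards [hsq.eventually (eventually_lt_nhds hx)] with b hb using eq_of_gt hb

lemma deriv_sq_ae_eq :
    (fun y => deriv (ramp a) y ^ 2) =ᵐ[volume] (Iic (a ^ 2)).indicator fun _ => (a ^ 2)⁻¹ := by
  filter_upwards [compl_mem_ae_iff.mpr (measure_singleton (a ^ 2))] with y hy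
  rcases lt_or_gt_of_ne hy with hlt | hgt
  · rw [(hasDerivAt_of_lt hlt).deriv, indicator_of_mem (mem_Iic.mpr hlt.le), neg_sq, inv_pow]
  · rw [(hasDerivAt_of_gt hgt).deriv, indicator_of_notMem (notMem_Iic.mpr hgt)]
    ring

lemma setIntegral_deriv_sq {s : Set ℝ} :
    ∫ y in s, deriv (ramp a) y ^ 2 = volume.real (Iic (a ^ 2) ∩ s) / a ^ 2 := by
  rw [integral_congr_ae (ae_restrict_of_ae deriv_sq_ae_eq), integral_indicator measurableSet_Iic,
    Measure.restrict_restrict measurableSet_Iic, setIntegral_const, smul_eq_mul, div_eq_mul_inv]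

lemma integral_deriv_sq_Ioi (ha : a ≠ 0) : ∫ y in Ioi 0, deriv (ramp a) y ^ 2 = 1 := by
  rw [setIntegral_deriv_sq, inter_comm, Ioi_inter_Iic, volume_real_Ioc_of_le (sq_nonneg a),
    sub_zero, div_self (pow_ne_zero 2 ha)]

lemma intervalIntegral_deriv_sq (hx : 0 ≤ x) :
    ∫ y in (0 : ℝ)..x, deriv (ramp a) y ^ 2 = min x (a ^ 2) / a ^ 2 := by
  rw [intervalIntegral.integral_of_le hx, setIntegral_deriv_sq, inter_comm, Ioc_inter_Iic,
    volume_real_Ioc_of_le (le_min hx (sq_nonneg a)), sub_zero]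

lemma abs_le (ha : 0 < a) (hx : 0 ≤ x) : |ramp a x| ≤ a := by
  by_cases hle : x ≤ a ^ 2
  · rw [eq_of_le hle, abs_div, abs_neg, abs_of_nonneg hx, abs_of_pos ha, div_le_iff₀ ha]
    nlinarith
  · rw [eq_of_gt (not_le.mp hle), abs_neg, abs_of_pos ha]

lemma eq_at_kink (ha : a ≠ 0) : ramp a (a ^ 2) = -a := by
  rw [eq_of_le le_rfl]
  field_simp

lemma sSup_abs (ha : 0 < a) : sSup {r : ℝ | ∃ x : ℝ, 0 ≤ x ∧ r = |ramp a x|} = a := by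
  refine IsGreatest.csSup_eq ⟨⟨a ^ 2, sq_nonneg a, ?_⟩, ?_⟩
  · rw [eq_at_kink ha.ne', abs_neg, abs_of_pos ha]
  · rintro r ⟨x, hx, rfl⟩
    exact abs_le ha hx

end ramp

section Solution

variable {t x : ℝ}

lemma hasDerivAt_ramp_time_of_lt (ht : t < 1) (hx : x < (1 - t) ^ 2) :
    HasDerivAt (fun s => ramp (1 - s) x) (-(x / (1 - t) ^ 2)) t := by
  exact ((ramp.hasDerivAt_param_of_lt (sub_ne_zero.mpr ht.ne') hx).scomp t
    ((hasDerivAt_id t).const_sub 1)).congr_deriv (by simp)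

lemma hasDerivAt_ramp_time_of_gt (hx : (1 - t) ^ 2 < x) :
    HasDerivAt (fun s => ramp (1 - s) x) 1 t := by
  exact ((ramp.hasDerivAt_param_of_gt hx).scomp t ((hasDerivAt_id t).const_sub 1)).congr_deriv
    (by simp)

lemma ramp_solves_equation (ht : t < 1) (hx : 0 < x) (hkink : x ≠ (1 - t) ^ 2) :
    DifferentiableAt ℝ (fun s => ramp (1 - s) x) t ∧
    DifferentiableAt ℝ (ramp (1 - t)) x ∧
    deriv (fun s => ramp (1 - s) x) t + 2 * ramp (1 - t) x * deriv (ramp (1 - t)) x =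
      ∫ y in (0 : ℝ)..x, deriv (ramp (1 - t)) y ^ 2 := by
  have ha : 1 - t ≠ 0 := sub_ne_zero.mpr ht.ne'
  rw [ramp.intervalIntegral_deriv_sq hx.le]
  rcases lt_or_gt_of_ne hkink with hlt | hgt
  · have hdt := hasDerivAt_ramp_time_of_lt ht hlt
    have hdx := ramp.hasDerivAt_of_lt hlt
    refine ⟨hdt.differentiableAt, hdx.differentiableAt, ?_⟩
    rw [hdt.deriv, hdx.deriv, ramp.eq_of_le hlt.le, min_eq_left hlt.le]
    field_simp
    ring
  · have hdt := hasDerivAt_ramp_time_of_gt hgt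
    have hdx := ramp.hasDerivAt_of_gt hgt
    refine ⟨hdt.differentiableAt, hdx.differentiableAt, ?_⟩
    rw [hdt.deriv, hdx.deriv, min_eq_right hgt.le, div_self (pow_ne_zero 2 ha)]
    ring

end Solution

theorem stmt15 (u : ℝ → ℝ → ℝ)
    (hu : ∀ t x : ℝ, u t x = if x ≤ (1 - t) ^ 2 then -x / (1 - t) else -(1 - t)) :
    (∀ t x : ℝ, 0 ≤ t → t < 1 → 0 < x → x ≠ (1 - t) ^ 2 →
      DifferentiableAt ℝ (fun s => u s x) t ∧
      DifferentiableAt ℝ (fun z => u t z) x ∧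
      deriv (fun s => u s x) t + 2 * u t x * deriv (fun z => u t z) x =
        ∫ y in (0:ℝ)..x, (deriv (fun z => u t z) y) ^ 2) ∧
    (∀ t : ℝ, 0 ≤ t → t < 1 →
      ∫ x in Set.Ioi (0:ℝ), (deriv (fun z => u t z) x) ^ 2 = 1) ∧
    (∀ t : ℝ, 0 ≤ t → t < 1 →
      sSup {r : ℝ | ∃ x : ℝ, 0 ≤ x ∧ r = |u t x|} = 1 - t) ∧
    Filter.Tendsto (fun t => sSup {r : ℝ | ∃ x : ℝ, 0 ≤ x ∧ r = |u t x|})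
      (nhdsWithin 1 (Set.Ico 0 1)) (nhds 0) := by
  obtain rfl : u = fun t => ramp (1 - t) := funext fun t => funext (hu t)
  have hsup : ∀ t : ℝ, t < 1 → sSup {r : ℝ | ∃ x : ℝ, 0 ≤ x ∧ r = |ramp (1 - t) x|} = 1 - t :=
    fun t ht => ramp.sSup_abs (sub_pos.mpr ht)
  refine ⟨fun t x _ ht hx hkink => ramp_solves_equation ht hx hkink,
    fun t _ ht => ramp.integral_deriv_sq_Ioi (sub_ne_zero.mpr ht.ne'),
    fun t _ ht => hsup t ht, ?_⟩
  have hlim : Filter.Tendsto (fun t : ℝ => 1 - t) (nhdsWithin 1 (Ico 0 1)) (nhds 0) :=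
    ((continuous_const.sub continuous_id).tendsto' 1 0 (sub_self 1)).mono_left nhdsWithin_le_nhds
  refine hlim.congr' ?_
  filter_upwards [self_mem_nhdsWithin] with t ht using (hsup t ht.2).symm
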